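/- Let n ≥ 1 and let a₁, …, aₙ > 0 be real numbers. Define g : [0, ∞) → ℝ by g(x) := √((1/n) Σᵢ aᵢ/(aᵢ + x)²) · √((1/n) Σᵢ aᵢ) + √((1/n) Σᵢ (x/(aᵢ + x))²). Then g is nonincreasing on [0, ∞) and g(x) → 1 as x → ∞; consequently g(x) ≥ 1 for all x ≥ 0. -/

import Mathlib

/-!
Write `A`, `B` for the two means under the roots carrying `x`, `S` for the mean of the `aᵢ`, and
`D = 𝔼 2aᵢ/(aᵢ+x)³ > 0`. Then `A' = -D` and `B' = x D`, so
`g' = (D / 2) (x / √B - √S / √A)`, which is `≤ 0` exactly when `x² A ≤ S B`.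
Since `x² aᵢ/(aᵢ+x)² = aᵢ (x/(aᵢ+x))²` and `aᵢ ↦ (x/(aᵢ+x))²` is decreasing,
this is Chebyshev's sum inequality for oppositely ordered sequences.
As `x → ∞`, `A → 0` and `B → 1`, so `g → 1`, and monotonicity gives `g ≥ 1`.
-/

open Finset Filter
open scoped BigOperators

section Expect

variable {ι : Type*} [Fintype ι]

theorem HasDerivAt.fun_expect {f : ι → ℝ → ℝ} {f' : ι → ℝ} {x : ℝ}
    (h : ∀ i, HasDerivAt (f i) (f' i) x) :
    HasDerivAt (fun y => 𝔼 i, f i y) (𝔼 i, f' i) x := by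
  simp only [Fintype.expect_eq_sum_div_card]
  exact (HasDerivAt.fun_sum fun i _ => h i).div_const _

theorem tendsto_expect {α : Type*} {l : Filter α} {f : ι → α → ℝ} {c : ι → ℝ}
    (h : ∀ i, Tendsto (f i) l (nhds (c i))) :
    Tendsto (fun y => 𝔼 i, f i y) l (nhds (𝔼 i, c i)) := by
  simp only [Fintype.expect_eq_sum_div_card]
  exact (tendsto_finsetSum _ fun i _ => h i).div_const _

theorem Antivary.expect_mul_le_expect_mul_expect {f g : ι → ℝ} (hfg : Antivary f g) :
    𝔼 i, f i * g i ≤ (𝔼 i, f i) * 𝔼 i, g i := by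
  simp only [Fintype.expect_eq_sum_div_card, div_mul_div_comm]
  rcases (Nat.cast_nonneg (α := ℝ) (Fintype.card ι)).eq_or_lt with hcard | hcard
  · simp [← hcard]
  · rw [div_le_div_iff₀ hcard (by positivity)]
    have := hfg.card_mul_sum_le_sum_mul_sum
    nlinarith

theorem expect_fin_eq_one_div_mul_sum {n : ℕ} (f : Fin n → ℝ) :
    𝔼 i, f i = (1 / n : ℝ) * ∑ i, f i := by
  rw [Fintype.expect_eq_sum_div_card, Fintype.card_fin, one_div_mul_eq_div]

end Expect

theorem hasDerivAt_const_div_add_sq {c x : ℝ} (h : c + x ≠ 0) :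
    HasDerivAt (fun y => c / (c + y) ^ 2) (-(2 * c / (c + x) ^ 3)) x := by
  refine ((hasDerivAt_const x c).fun_div (((hasDerivAt_id' x).const_add c).fun_pow 2)
    (pow_ne_zero 2 h)).congr_deriv ?_
  field_simp
  ring

theorem hasDerivAt_div_const_add_sq {c x : ℝ} (h : c + x ≠ 0) :
    HasDerivAt (fun y => (y / (c + y)) ^ 2) (x * (2 * c / (c + x) ^ 3)) x := by
  refine (((hasDerivAt_id' x).fun_div ((hasDerivAt_id' x).const_add c) h).fun_pow 2).congr_deriv
    ?_
  norm_num
  field_simp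

theorem tendsto_div_const_add_atTop (c : ℝ) :
    Tendsto (fun x : ℝ => x / (c + x)) atTop (nhds 1) := by
  have h : Tendsto (fun x : ℝ => 1 - c / (c + x)) atTop (nhds (1 - 0)) :=
    tendsto_const_nhds.sub
      (tendsto_const_nhds.div_atTop (tendsto_atTop_add_const_left _ _ tendsto_id))
  rw [sub_zero] at h
  refine h.congr' ?_
  filter_upwards [eventually_gt_atTop (-c)] with x hx
  field_simp [show c + x ≠ 0 by linarith]
  ring

section Mean

variable {ι : Type*} [Fintype ι] (a : ι → ℝ)

noncomputable def invSqMean (x : ℝ) : ℝ := 𝔼 i, a i / (a i + x) ^ 2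

noncomputable def ratioSqMean (x : ℝ) : ℝ := 𝔼 i, (x / (a i + x)) ^ 2

noncomputable def invCubeMean (x : ℝ) : ℝ := 𝔼 i, 2 * a i / (a i + x) ^ 3

noncomputable def gMean (x : ℝ) : ℝ :=
  √(invSqMean a x) * √(𝔼 i, a i) + √(ratioSqMean a x)

theorem tendsto_gMean_atTop [Nonempty ι] : Tendsto (gMean a) atTop (nhds 1) := by
  have hA : Tendsto (invSqMean a) atTop (nhds 0) := by
    unfold invSqMean
    simpa using tendsto_expect fun i => tendsto_const_nhds.div_atTop
      ((tendsto_pow_atTop two_ne_zero).comp (tendsto_atTop_add_const_left _ (a i) tendsto_id))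
  have hB : Tendsto (ratioSqMean a) atTop (nhds 1) := by
    unfold ratioSqMean
    simpa using tendsto_expect fun i => (tendsto_div_const_add_atTop (a i)).pow 2
  unfold gMean
  simpa using (hA.sqrt.mul_const √(𝔼 i, a i)).add hB.sqrt

variable {a}

theorem hasDerivAt_invSqMean {x : ℝ} (h : ∀ i, a i + x ≠ 0) :
    HasDerivAt (invSqMean a) (-invCubeMean a x) x := by
  rw [invCubeMean, ← expect_neg_distrib]
  exact HasDerivAt.fun_expect fun i => hasDerivAt_const_div_add_sq (h i)

theorem hasDerivAt_ratioSqMean {x : ℝ} (h : ∀ i, a i + x ≠ 0) :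
    HasDerivAt (ratioSqMean a) (x * invCubeMean a x) x := by
  rw [invCubeMean, mul_expect]
  exact HasDerivAt.fun_expect fun i => hasDerivAt_div_const_add_sq (h i)

theorem continuousOn_gMean (ha : ∀ i, 0 < a i) : ContinuousOn (gMean a) (Set.Ici 0) :=
  fun x hx =>
  have h : ∀ i, a i + x ≠ 0 := fun i => (add_pos_of_pos_of_nonneg (ha i) hx).ne'
  (((hasDerivAt_invSqMean h).continuousAt.sqrt.mul continuousAt_const).add
    (hasDerivAt_ratioSqMean h).continuousAt.sqrt).continuousWithinAt

theorem sq_mul_invSqMean_le (ha : ∀ i, 0 < a i) {x : ℝ} (hx : 0 ≤ x) :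
    x ^ 2 * invSqMean a x ≤ (𝔼 i, a i) * ratioSqMean a x := by
  have hanti : Antivary a fun i => (x / (a i + x)) ^ 2 := by
    intro i j hij
    by_contra! hlt
    have := ha i
    have := ha j
    have : (x / (a j + x)) ^ 2 ≤ (x / (a i + x)) ^ 2 := by gcongr
    exact hij.not_ge this
  calc x ^ 2 * invSqMean a x = 𝔼 i, a i * (x / (a i + x)) ^ 2 := by
        rw [invSqMean, mul_expect]
        refine expect_congr rfl fun i _ => ?_
        have := ha i
        field_simp
    _ ≤ _ := hanti.expect_mul_le_expect_mul_expect

variable [Nonempty ι]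

theorem invSqMean_pos (ha : ∀ i, 0 < a i) {x : ℝ} (hx : 0 ≤ x) : 0 < invSqMean a x :=
  expect_pos (fun i _ => by have := ha i; positivity) univ_nonempty

theorem ratioSqMean_pos (ha : ∀ i, 0 < a i) {x : ℝ} (hx : 0 < x) : 0 < ratioSqMean a x :=
  expect_pos (fun i _ => by have := ha i; positivity) univ_nonempty

theorem invCubeMean_pos (ha : ∀ i, 0 < a i) {x : ℝ} (hx : 0 ≤ x) : 0 < invCubeMean a x :=
  expect_pos (fun i _ => by have := ha i; positivity) univ_nonempty

theorem hasDerivAt_gMean (ha : ∀ i, 0 < a i) {x : ℝ} (hx : 0 < x) :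
    HasDerivAt (gMean a)
      (-invCubeMean a x / (2 * √(invSqMean a x)) * √(𝔼 i, a i)
        + x * invCubeMean a x / (2 * √(ratioSqMean a x))) x := by
  have h : ∀ i, a i + x ≠ 0 := fun i => (add_pos (ha i) hx).ne'
  exact (((hasDerivAt_invSqMean h).sqrt (invSqMean_pos ha hx.le).ne').mul_const _).add
    ((hasDerivAt_ratioSqMean h).sqrt (ratioSqMean_pos ha hx).ne')

theorem antitoneOn_gMean (ha : ∀ i, 0 < a i) : AntitoneOn (gMean a) (Set.Ici 0) := by
  refine antitoneOn_of_hasDerivWithinAt_nonpos (convex_Ici 0) (continuousOn_gMean ha)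
    (fun x hx => (hasDerivAt_gMean ha (by simpa using hx)).hasDerivWithinAt) fun x hx => ?_
  rw [interior_Ici, Set.mem_Ioi] at hx
  have hA := Real.sqrt_pos.2 (invSqMean_pos ha hx.le)
  have hB := Real.sqrt_pos.2 (ratioSqMean_pos ha hx)
  have hD := invCubeMean_pos ha hx.le
  have key : x * √(invSqMean a x) ≤ √(𝔼 i, a i) * √(ratioSqMean a x) := by
    calc x * √(invSqMean a x) = √(x ^ 2 * invSqMean a x) := by
          rw [Real.sqrt_mul (sq_nonneg x), Real.sqrt_sq hx.le]
      _ ≤ √((𝔼 i, a i) * ratioSqMean a x) := Real.sqrt_le_sqrt (sq_mul_invSqMean_le ha hx.le)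
      _ = √(𝔼 i, a i) * √(ratioSqMean a x) := Real.sqrt_mul' _ (ratioSqMean_pos ha hx).le
  calc _ = invCubeMean a x / (2 * √(invSqMean a x) * √(ratioSqMean a x)) *
        (x * √(invSqMean a x) - √(𝔼 i, a i) * √(ratioSqMean a x)) := by
          field_simp
          ring
    _ ≤ 0 := mul_nonpos_of_nonneg_of_nonpos (by positivity) (sub_nonpos.2 key)

end Mean

theorem stmt3 (n : ℕ) (hn : 1 ≤ n) (a : Fin n → ℝ) (ha : ∀ i, 0 < a i)
    (g : ℝ → ℝ)
    (hg : ∀ x, g x =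
      Real.sqrt ((1 / n : ℝ) * ∑ i, a i / (a i + x) ^ 2) *
          Real.sqrt ((1 / n : ℝ) * ∑ i, a i)
        + Real.sqrt ((1 / n : ℝ) * ∑ i, (x / (a i + x)) ^ 2)) :
    AntitoneOn g (Set.Ici 0) ∧ Tendsto g atTop (nhds 1) ∧ ∀ x, 0 ≤ x → 1 ≤ g x := by
  have : Nonempty (Fin n) := Fin.pos_iff_nonempty.mp hn
  obtain rfl : g = gMean a := funext fun x => by
    simp only [hg, gMean, invSqMean, ratioSqMean, expect_fin_eq_one_div_mul_sum]
  refine ⟨antitoneOn_gMean ha, tendsto_gMean_atTop a, fun x hx => ?_⟩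
  refine le_of_tendsto (tendsto_gMean_atTop a) ?_
  filter_upwards [eventually_ge_atTop x] with y hy
  exact antitoneOn_gMean ha hx (hx.trans hy) hy
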